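/- For every set F of polynomials in 𝕋[x_1,…,x_n], the tropical algebraic set Z(F) = {a ∈ 𝕋^n : f(a) ∈ 𝕌̄ for all f ∈ F} is a closed subset of 𝕋^n. -/

import Mathlib

/-- The extended tropical semiring `𝕋`: tangible reals `(a, false)`,
ghost reals `(a, true)`, and `none` = `-∞`. -/
def T : Type := Option (ℝ × Bool)

namespace T

/-- The tangible element of value `a`. -/
def tang (a : ℝ) : T := some (a, false)

/-- The ghost element `a^ν` of value `a`. -/
def ghost (a : ℝ) : T := some (a, true)

/-- Tropical addition on `𝕋`. -/
noncomputable def add : T → T → T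
  | none, y => y
  | some p, none => some p
  | some (a, s), some (b, t) =>
      if a < b then some (b, t) else if b < a then some (a, s) else some (a, true)

/-- Tropical multiplication on `𝕋`. -/
noncomputable def mul : T → T → T
  | none, _ => none
  | some _, none => none
  | some (a, s), some (b, t) => some (a + b, s || t)

lemma add_assoc' : ∀ x y z : T, add (add x y) z = add x (add y z) := by
  show ∀ x y z : T, @Eq (Option (ℝ × Bool)) (add (add x y) z) (add x (add y z))
  rintro (_ | ⟨a, s⟩) (_ | ⟨b, t⟩) (_ | ⟨c, u⟩) <;> simp only [add] <;> grind [add]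

lemma add_comm' : ∀ x y : T, add x y = add y x := by
  show ∀ x y : T, @Eq (Option (ℝ × Bool)) (add x y) (add y x)
  rintro (_ | ⟨a, s⟩) (_ | ⟨b, t⟩) <;> simp only [add] <;> grind

lemma mul_assoc' : ∀ x y z : T, mul (mul x y) z = mul x (mul y z) := by
  show ∀ x y z : T, @Eq (Option (ℝ × Bool)) (mul (mul x y) z) (mul x (mul y z))
  rintro (_ | ⟨a, s⟩) (_ | ⟨b, t⟩) (_ | ⟨c, u⟩) <;>
    simp [mul, add_assoc, Bool.or_assoc]

lemma mul_comm' : ∀ x y : T, mul x y = mul y x := by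
  show ∀ x y : T, @Eq (Option (ℝ × Bool)) (mul x y) (mul y x)
  rintro (_ | ⟨a, s⟩) (_ | ⟨b, t⟩) <;> simp [mul, add_comm, Bool.or_comm]

lemma left_distrib' : ∀ x y z : T, mul x (add y z) = add (mul x y) (mul x z) := by
  show ∀ x y z : T, @Eq (Option (ℝ × Bool)) (mul x (add y z)) (add (mul x y) (mul x z))
  rintro (_ | ⟨a, s⟩) (_ | ⟨b, t⟩) (_ | ⟨c, u⟩) <;> simp only [add, mul] <;> grind [add, mul]

noncomputable instance : Zero T := ⟨none⟩
noncomputable instance : One T := ⟨some (0, false)⟩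
noncomputable instance : Add T := ⟨add⟩
noncomputable instance : Mul T := ⟨mul⟩

noncomputable instance : CommSemiring T where
  add := (· + ·)
  zero := 0
  add_assoc := add_assoc'
  zero_add := fun x => by cases x <;> rfl
  add_zero := fun x => by cases x <;> rfl
  add_comm := add_comm'
  mul := (· * ·)
  one := 1
  mul_assoc := mul_assoc'
  one_mul := fun x => by
    show @Eq (Option (ℝ × Bool)) (mul (some (0, false)) x) x
    rcases x with _ | ⟨a, s⟩ <;> simp [mul]
  mul_one := fun x => by
    show @Eq (Option (ℝ × Bool)) (mul x (some (0, false))) x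
    rcases x with _ | ⟨a, s⟩ <;> simp [mul]
  mul_comm := mul_comm'
  zero_mul := fun x => by cases x <;> rfl
  mul_zero := fun x => by cases x <;> rfl
  left_distrib := left_distrib'
  right_distrib := fun x y z => by
    show mul (add x y) z = add (mul x z) (mul y z)
    rw [mul_comm', left_distrib', mul_comm' z x, mul_comm' z y]
  nsmul := nsmulRec

/-- Membership in the ghost part `𝕌̄ = 𝕌 ∪ {-∞}` of `𝕋`. -/
def isGhost : T → Prop
  | none => True
  | some (_, s) => s = true

/-- Membership in the tangible part `ℝ ∪ {-∞}` of `𝕋`. -/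
def isTangible : T → Prop
  | none => True
  | some (_, s) => s = false

/-- The underlying real value (junk value `0` at `-∞`); this is `π` on elements `≠ -∞`. -/
def val : T → ℝ
  | none => 0
  | some (a, _) => a

/-- The ghost map `ν`. -/
def nu : T → T
  | none => none
  | some (a, _) => some (a, true)

end T

namespace T

/-- The model value in the half line `[0,∞)`: `-∞ ↦ 0`, an element of value `a ↦ exp a`. -/
noncomputable def gval : T → ℝ
  | none => 0
  | some (a, _) => Real.exp a

lemma nu_isGhost : ∀ x : T, isGhost (nu x)
  | none => trivial
  | some (_, _) => rfl

lemma gval_injOn_tang : Set.InjOn gval {x : T | isTangible x} := by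
  rintro (_ | ⟨a, s⟩) hx (_ | ⟨b, t⟩) hy h <;>
    simp only [gval, Set.mem_setOf_eq, isTangible] at hx hy h
  · rfl
  · exact absurd h.symm (Real.exp_pos b).ne'
  · exact absurd h (Real.exp_pos a).ne'
  · rw [Real.exp_eq_exp] at h; subst hx; subst hy; subst h; rfl

lemma gval_injOn_ghost : Set.InjOn gval {x : T | isGhost x} := by
  rintro (_ | ⟨a, s⟩) hx (_ | ⟨b, t⟩) hy h <;>
    simp only [gval, Set.mem_setOf_eq, isGhost] at hx hy h
  · rfl
  · exact absurd h.symm (Real.exp_pos b).ne'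
  · exact absurd h (Real.exp_pos a).ne'
  · rw [Real.exp_eq_exp] at h; subst hx; subst hy; subst h; rfl

lemma gval_image_tang : gval '' {x : T | isTangible x} = Set.Ici 0 := by
  ext y
  constructor
  · rintro ⟨(_ | ⟨a, s⟩), hx, rfl⟩
    · exact Set.self_mem_Ici
    · exact le_of_lt (by simpa [gval] using Real.exp_pos a)
  · intro hy
    rcases eq_or_lt_of_le (Set.mem_Ici.mp hy) with h | h
    · exact ⟨none, trivial, h⟩
    · exact ⟨some (Real.log y, false), rfl, by simp [gval, Real.exp_log h]⟩

lemma gval_image_ghost : gval '' {x : T | isGhost x} = Set.Ici 0 := by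
  ext y
  constructor
  · rintro ⟨(_ | ⟨a, s⟩), hx, rfl⟩
    · exact Set.self_mem_Ici
    · exact le_of_lt (by simpa [gval] using Real.exp_pos a)
  · intro hy
    rcases eq_or_lt_of_le (Set.mem_Ici.mp hy) with h | h
    · exact ⟨none, trivial, h⟩
    · exact ⟨some (Real.log y, true), rfl, by simp [gval, Real.exp_log h]⟩

/-- The closed sets of the topology on `𝕋`: both the tangible and the ghost layers are
closed in the model `[0,∞)` of `𝕌̄`, and the ghost image of the tangible layer is
contained in the set. -/
def TIsClosed (W : Set T) : Prop :=
  IsClosed (gval '' (W ∩ {x | isTangible x})) ∧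
  IsClosed (gval '' (W ∩ {x | isGhost x})) ∧
  nu '' (W ∩ {x | isTangible x}) ⊆ W ∩ {x | isGhost x}

/-- The topology on `𝕋`. -/
noncomputable instance : TopologicalSpace T :=
  TopologicalSpace.ofClosed {W | TIsClosed W}
    (by
      refine ⟨?_, ?_, ?_⟩ <;> simp [TIsClosed])
    (fun A hA => by
      rcases A.eq_empty_or_nonempty with rfl | hne
      · rw [Set.sInter_empty]
        refine ⟨?_, ?_, ?_⟩
        · rw [Set.univ_inter, gval_image_tang]; exact isClosed_Ici
        · rw [Set.univ_inter, gval_image_ghost]; exact isClosed_Ici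
        · rintro y ⟨x, ⟨-, _⟩, rfl⟩
          exact ⟨trivial, nu_isGhost x⟩
      · have : Nonempty A := hne.to_subtype
        have h1 : (⋂₀ A) ∩ {x : T | isTangible x}
            = ⋂ (W : A), ((W : Set T) ∩ {x | isTangible x}) := by
          ext x
          simp only [Set.mem_inter_iff, Set.mem_sInter, Set.mem_iInter, Set.mem_setOf_eq]
          constructor
          · rintro ⟨h, ht⟩ W; exact ⟨h W W.2, ht⟩
          · intro h
            obtain ⟨W, hW⟩ := hne
            exact ⟨fun V hV => (h ⟨V, hV⟩).1, (h ⟨W, hW⟩).2⟩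
        have h2 : (⋂₀ A) ∩ {x : T | isGhost x}
            = ⋂ (W : A), ((W : Set T) ∩ {x | isGhost x}) := by
          ext x
          simp only [Set.mem_inter_iff, Set.mem_sInter, Set.mem_iInter, Set.mem_setOf_eq]
          constructor
          · rintro ⟨h, ht⟩ W; exact ⟨h W W.2, ht⟩
          · intro h
            obtain ⟨W, hW⟩ := hne
            exact ⟨fun V hV => (h ⟨V, hV⟩).1, (h ⟨W, hW⟩).2⟩
        refine ⟨?_, ?_, ?_⟩
        · rw [h1, Set.InjOn.image_iInter_eq
            (gval_injOn_tang.mono (Set.iUnion_subset fun W => Set.inter_subset_right))]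
          exact isClosed_iInter fun W => (hA W.2).1
        · rw [h2, Set.InjOn.image_iInter_eq
            (gval_injOn_ghost.mono (Set.iUnion_subset fun W => Set.inter_subset_right))]
          exact isClosed_iInter fun W => (hA W.2).2.1
        · rintro y ⟨x, ⟨hx, hxt⟩, rfl⟩
          refine ⟨fun W hW => ((hA hW).2.2 ⟨x, ⟨hx W hW, hxt⟩, rfl⟩).1, nu_isGhost x⟩)
    (fun A hA B hB => by
      have h1 : (A ∪ B) ∩ {x : T | isTangible x}
          = (A ∩ {x | isTangible x}) ∪ (B ∩ {x | isTangible x}) :=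
        Set.union_inter_distrib_right A B _
      have h2 : (A ∪ B) ∩ {x : T | isGhost x}
          = (A ∩ {x | isGhost x}) ∪ (B ∩ {x | isGhost x}) :=
        Set.union_inter_distrib_right A B _
      refine ⟨?_, ?_, ?_⟩
      · rw [h1, Set.image_union]; exact hA.1.union hB.1
      · rw [h2, Set.image_union]; exact hA.2.1.union hB.2.1
      · rintro y ⟨x, ⟨hx, hxt⟩, rfl⟩
        rcases hx with hxA | hxB
        · have h := hA.2.2 ⟨x, ⟨hxA, hxt⟩, rfl⟩
          exact ⟨Or.inl h.1, h.2⟩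
        · have h := hB.2.2 ⟨x, ⟨hxB, hxt⟩, rfl⟩
          exact ⟨Or.inr h.1, h.2⟩)

end T

/-! The topology of `𝕋` is the coarsest one for which the value map `gval : 𝕋 → [0, ∞)` is
continuous and the set `𝕋 ∖ 𝕌̄` of nonzero tangible elements is open (`T.continuous_iff`).
Addition and multiplication pass this test: `gval` turns them into `max` and `*`, a sum lies
outside `𝕌̄` iff its strictly larger summand does, and a product iff both factors do. Hence `𝕋`
is a topological semiring, polynomial evaluation is continuous, and `Z(F)` is an intersection
of preimages of the closed set `𝕌̄`. -/

namespace T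

lemma isClosed_iff {W : Set T} : IsClosed W ↔ TIsClosed W := by
  rw [← isOpen_compl_iff]
  exact Iff.of_eq (congrArg TIsClosed (compl_compl W))

lemma gval_nu : ∀ x : T, gval (nu x) = gval x
  | none => rfl
  | some _ => rfl

lemma gval_add : ∀ x y : T, gval (x + y) = max (gval x) (gval y) := by
  rintro (_ | ⟨a, s⟩) (_ | ⟨b, t⟩) <;> show gval (add _ _) = _ <;> simp only [add]
  · simp [gval]
  · simp [gval, (Real.exp_pos b).le]
  · simp [gval, (Real.exp_pos a).le]
  · split_ifs <;> simp only [gval, max_def, Real.exp_le_exp] <;> grind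

lemma gval_mul : ∀ x y : T, gval (x * y) = gval x * gval y := by
  rintro (_ | ⟨a, s⟩) (_ | ⟨b, t⟩) <;> show gval (mul _ _) = _ <;> simp [mul, gval, Real.exp_add]

lemma not_isGhost_add_iff : ∀ x y : T, ¬ isGhost (x + y) ↔
    (gval y < gval x ∧ ¬ isGhost x) ∨ (gval x < gval y ∧ ¬ isGhost y) := by
  rintro (_ | ⟨a, s⟩) (_ | ⟨b, t⟩) <;> show ¬ isGhost (add _ _) ↔ _ <;> simp only [add]
  · simp [isGhost]
  · simp [gval, isGhost, Real.exp_pos]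
  · simp [gval, isGhost, Real.exp_pos]
  · split_ifs <;> simp only [gval, isGhost, Real.exp_lt_exp] <;> grind

lemma isGhost_mul_iff : ∀ x y : T, isGhost (x * y) ↔ isGhost x ∨ isGhost y := by
  rintro (_ | ⟨a, s⟩) (_ | ⟨b, t⟩) <;> show isGhost (mul _ _) ↔ _ <;> simp [mul, isGhost]

lemma isTangible_of_not_isGhost : ∀ {x : T}, ¬ isGhost x → isTangible x
  | none, _ => trivial
  | some (_, false), _ => rfl
  | some (_, true), h => absurd rfl h

lemma eq_none_of_isGhost_of_isTangible : ∀ {x : T}, isGhost x → isTangible x → x = none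
  | none, _, _ => rfl
  | some (_, false), h, _ => nomatch h
  | some (_, true), _, h => nomatch h

lemma continuous_gval : Continuous gval := by
  refine continuous_iff_isClosed.2 fun C hC => isClosed_iff.2 ⟨?_, ?_, ?_⟩
  · rw [Set.inter_comm, Set.image_inter_preimage, gval_image_tang]
    exact isClosed_Ici.inter hC
  · rw [Set.inter_comm, Set.image_inter_preimage, gval_image_ghost]
    exact isClosed_Ici.inter hC
  · rintro _ ⟨x, ⟨hx, -⟩, rfl⟩
    exact ⟨show gval (nu x) ∈ C by rwa [gval_nu], nu_isGhost x⟩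

lemma isClosed_setOf_isGhost : IsClosed {x : T | isGhost x} := by
  refine isClosed_iff.2 ⟨?_, ?_, ?_⟩
  · have h : {x : T | isGhost x} ∩ {x | isTangible x} ⊆ {none} :=
      fun _ ⟨hg, ht⟩ => eq_none_of_isGhost_of_isTangible hg ht
    exact ((Set.subsingleton_singleton.anti h).image gval).isClosed
  · rw [Set.inter_self, gval_image_ghost]
    exact isClosed_Ici
  · rintro _ ⟨x, -, rfl⟩
    exact ⟨nu_isGhost x, nu_isGhost x⟩

lemma isOpen_setOf_not_isGhost : IsOpen {x : T | ¬ isGhost x} :=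
  isClosed_setOf_isGhost.isOpen_compl

lemma exists_eq_preimage_gval_union_of_isOpen {U : Set T} (hU : IsOpen U) :
    ∃ A B : Set ℝ, IsOpen A ∧ IsOpen B ∧
      U = gval ⁻¹' A ∪ (gval ⁻¹' B ∩ {x | ¬ isGhost x}) := by
  obtain ⟨hTang, hGhost, hNu⟩ := isClosed_iff.1 hU.isClosed_compl
  refine ⟨_, _, hGhost.isOpen_compl, hTang.isOpen_compl, ?_⟩
  ext x
  by_cases hx : isGhost x
  · simp [hx, gval_injOn_ghost.mem_image_iff Set.inter_subset_right hx]
  · have ht := isTangible_of_not_isGhost hx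
    simp only [Set.mem_union, Set.mem_preimage, Set.mem_compl_iff, Set.mem_inter_iff,
      Set.mem_ofPred_eq, hx, ht, not_false_eq_true, and_true, not_not,
      gval_injOn_tang.mem_image_iff Set.inter_subset_right ht]
    refine (or_iff_right_of_imp fun hA => ?_).symm
    by_contra hxU
    exact hA ⟨nu x, hNu ⟨x, ⟨hxU, ht⟩, rfl⟩, gval_nu x⟩

theorem continuous_iff {X : Type*} [TopologicalSpace X] {f : X → T} :
    Continuous f ↔ Continuous (gval ∘ f) ∧ IsOpen {y | ¬ isGhost (f y)} := by
  refine ⟨fun hf => ⟨continuous_gval.comp hf,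
    isOpen_setOf_not_isGhost.preimage hf⟩, fun ⟨hg, hS⟩ => ?_⟩
  refine continuous_def.2 fun U hU => ?_
  obtain ⟨A, B, hA, hB, rfl⟩ := exists_eq_preimage_gval_union_of_isOpen hU
  exact (hA.preimage hg).union ((hB.preimage hg).inter hS)

instance : ContinuousAdd T where
  continuous_add := by
    have hg₁ := continuous_gval.comp (continuous_fst : Continuous (Prod.fst : T × T → T))
    have hg₂ := continuous_gval.comp (continuous_snd : Continuous (Prod.snd : T × T → T))
    have hS := isOpen_setOf_not_isGhost
    refine continuous_iff.2 ⟨?_, ?_⟩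
    · show Continuous fun p : T × T => gval (p.1 + p.2)
      simpa only [gval_add, Function.comp_apply] using hg₁.max hg₂
    · simp only [not_isGhost_add_iff]
      exact ((isOpen_lt hg₂ hg₁).inter (hS.preimage continuous_fst)).union
        ((isOpen_lt hg₁ hg₂).inter (hS.preimage continuous_snd))

instance : ContinuousMul T where
  continuous_mul := by
    have hS := isOpen_setOf_not_isGhost
    refine continuous_iff.2 ⟨?_, ?_⟩
    · show Continuous fun p : T × T => gval (p.1 * p.2)
      simp only [gval_mul]
      exact (continuous_gval.comp continuous_fst).mul (continuous_gval.comp continuous_snd)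
    · simp only [isGhost_mul_iff, not_or]
      exact (hS.preimage continuous_fst).inter (hS.preimage continuous_snd)

instance : IsTopologicalSemiring T where

end T

/-- Lemma `lem:openAlgSet`: every tropical algebraic set is closed
in the topology of `𝕋^n`. -/
theorem tropical_algebraic_set_isClosed (n : ℕ) (F : Set (MvPolynomial (Fin n) T)) :
    IsClosed {a : Fin n → T | ∀ f ∈ F, T.isGhost (MvPolynomial.eval a f)} := by
  simp only [Set.ofPred_forall]
  exact isClosed_iInter fun f => isClosed_iInter fun _ =>
    T.isClosed_setOf_isGhost.preimage (MvPolynomial.continuous_eval f)
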